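/- arXiv:2002.11865 — 5 statements merged into one kernel-verified Lean document; each statement's English description precedes it below -/
import Mathlib

section
/- Let f: L¹ → (−∞, ∞] be dilatation monotone, ‖·‖₁ lower semicontinuous, and satisfy the coercivity condition lim_{|s|→∞} (f(s·1) + s) = ∞ where s·1 denotes constant random variables. Then for every X ∈ L¹ the infimum in ρ^f(X) = inf_{s∈ℝ}{f(X−s) − s} is attained: there exists s* ∈ ℝ with ρ^f(X) = f(X − s*) − s*. -/
open MeasureTheory Filter Topology

variable {Ω : Type*} [MeasurableSpace Ω]

/-- A finite measurable partition of `Ω` whose members have positive measure. -/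
structure FinPartition (μ : Measure Ω) where
  parts : Finset (Set Ω)
  measSet : ∀ A ∈ parts, MeasurableSet A
  pairwiseDisj : ∀ A ∈ parts, ∀ B ∈ parts, A ≠ B → Disjoint A B
  cover : ⋃ A ∈ parts, A = Set.univ
  pos : ∀ A ∈ parts, 0 < μ A

/-- Conditional expectation of `X` with respect to the finite partition `π`:
`E[X|π] = ∑_{A ∈ π} (∫_A X dμ / μ(A)) 1_A`. -/
noncomputable def pCondExp (μ : Measure Ω) (π : FinPartition μ) (X : Ω → ℝ) : Ω → ℝ :=
  fun ω => ∑ A ∈ π.parts, Set.indicator A (fun _ => (∫ x in A, X x ∂μ) / (μ A).toReal) ω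

/-- A simple random variable. -/
def IsSimpleRV (X : Ω → ℝ) : Prop := Measurable X ∧ (Set.range X).Finite

/-- Membership in the smallest ideal of `L¹` generated by `S`. -/
def MemIdeal (μ : Measure Ω) (S : Set (Ω → ℝ)) (X : Ω → ℝ) : Prop :=
  ∃ (n : ℕ) (Y : Fin n → Ω → ℝ) (l : Fin n → ℝ),
    (∀ i, Y i ∈ S) ∧ (∀ i, 0 ≤ l i) ∧ ∀ᵐ ω ∂μ, |X ω| ≤ ∑ i, l i * |Y i ω|

/-- Dilatation monotonicity of `ρ` on `𝓧`. -/
def DilMono (μ : Measure Ω) (𝓧 : Set (Ω → ℝ)) (ρ : (Ω → ℝ) → EReal) : Prop :=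
  ∀ X ∈ 𝓧, ∀ π : FinPartition μ, ρ (pCondExp μ π X) ≤ ρ X

/-- The Fatou property of `ρ` on `𝓧`. -/
def FatouProp (μ : Measure Ω) (𝓧 : Set (Ω → ℝ)) (ρ : (Ω → ℝ) → EReal) : Prop :=
  ∀ (Xn : ℕ → Ω → ℝ) (X : Ω → ℝ), (∀ n, Xn n ∈ 𝓧) → X ∈ 𝓧 →
    (∀ᵐ ω ∂μ, Tendsto (fun n => Xn n ω) atTop (nhds (X ω))) →
    (∃ Y, MemIdeal μ 𝓧 Y ∧ ∀ᵐ ω ∂μ, ∀ n, |Xn n ω| ≤ Y ω) →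
    ρ X ≤ liminf (fun n => ρ (Xn n)) atTop

/-- Convergence of a net in the `σ(L¹, 𝓛)` topology. -/
def TendstoWeakSimple (μ : Measure Ω) {ι : Type*} (l : Filter ι)
    (Xn : ι → Ω → ℝ) (X : Ω → ℝ) : Prop :=
  ∀ Z : Ω → ℝ, IsSimpleRV Z →
    Tendsto (fun i => ∫ ω, Xn i ω * Z ω ∂μ) l (nhds (∫ ω, X ω * Z ω ∂μ))

/-- The extension `ρ̄(X) = sup_{π ∈ Π} ρ(E[X|π])`. -/
noncomputable def rhoBar (μ : Measure Ω) (ρ : (Ω → ℝ) → EReal) (X : Ω → ℝ) : EReal :=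
  ⨆ π : FinPartition μ, ρ (pCondExp μ π X)

/-- The conjugate `ρ^#(Y) = sup_{X ∈ 𝓛} { E[XY] - ρ(X) }`. -/
noncomputable def sharp (μ : Measure Ω) (ρ : (Ω → ℝ) → EReal) (Y : Ω → ℝ) : EReal :=
  ⨆ X : {X : Ω → ℝ // IsSimpleRV X}, (((∫ ω, X.1 ω * Y ω ∂μ : ℝ) : EReal) - ρ X.1)

/-! Let `m = E[X]`. Dilatation monotonicity for the trivial partition gives
`f(m - t) ≤ f(X - t)`, so by coercivity `t ↦ f(X - t) - t` tends to `+∞` as `|t| → ∞`.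
It is lower semicontinuous because `X - tₙ → X - t` in `L¹` whenever `tₙ → t`, and a lower
semicontinuous function on `ℝ` that tends to `+∞` at infinity attains its infimum. -/

theorem lowerSemicontinuous_of_le_liminf_of_tendsto {α γ : Type*} [TopologicalSpace α]
    [FirstCountableTopology α] [CompleteLinearOrder γ] {g : α → γ}
    (h : ∀ (x : ℕ → α) (a : α), Tendsto x atTop (𝓝 a) → g a ≤ liminf (g ∘ x) atTop) :
    LowerSemicontinuous g := by
  intro a y hy
  by_contra hne
  obtain ⟨x, hxa, hxy⟩ := exists_seq_forall_of_frequently (not_eventually.1 hne)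
  have hlim : liminf (g ∘ x) atTop ≤ y :=
    liminf_le_of_frequently_le' (Frequently.of_forall fun n => not_lt.1 (hxy n))
  exact (h x a hxa |>.trans hlim).not_gt hy

theorem LowerSemicontinuous.exists_forall_le' {β α : Type*} [TopologicalSpace β] [LinearOrder α]
    {g : β → α} (hg : LowerSemicontinuous g) (x₀ : β)
    (h : ∀ᶠ x in cocompact β, g x₀ ≤ g x) : ∃ x, ∀ y, g x ≤ g y := by
  obtain ⟨K, hK, hKc⟩ := mem_cocompact.1 h
  obtain ⟨a, -, ha⟩ := (hg.lowerSemicontinuousOn _).exists_isMinOn (Set.insert_nonempty x₀ K)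
    (hK.insert x₀)
  refine ⟨a, fun y => ?_⟩
  by_cases hy : y ∈ insert x₀ K
  · exact ha hy
  · exact (ha (Set.mem_insert x₀ K)).trans (hKc fun hyK => hy (Set.mem_insert_of_mem x₀ hyK))

theorem LowerSemicontinuous.exists_forall_le_of_tendsto_top {β α : Type*} [TopologicalSpace β]
    [Nonempty β] [LinearOrder α] [OrderTop α] [TopologicalSpace α] [OrderTopology α]
    {g : β → α} (hg : LowerSemicontinuous g) (htop : Tendsto g (cocompact β) (𝓝 ⊤)) :
    ∃ x, ∀ y, g x ≤ g y := by
  by_cases hfin : ∃ x₀, g x₀ < ⊤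
  · obtain ⟨x₀, hx₀⟩ := hfin
    exact hg.exists_forall_le' x₀ ((htop.eventually (Ioi_mem_nhds hx₀)).mono fun _ => le_of_lt)
  · simp only [not_exists, not_lt, top_le_iff] at hfin
    exact ⟨Classical.arbitrary β, fun y => (hfin y).symm ▸ le_top⟩

theorem EReal.add_coe_sub_sub_coe (a : EReal) (m t : ℝ) :
    a + ((m - t : ℝ) : EReal) - m = a - t := by
  induction a using EReal.rec with
  | bot => simp
  | coe a => norm_cast; ring
  | top => rw [EReal.top_add_coe, EReal.top_sub_coe, EReal.top_sub_coe]

noncomputable def trivPartition (μ : Measure Ω) [IsProbabilityMeasure μ] : FinPartition μ where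
  parts := {Set.univ}
  measSet A hA := by
    rw [Finset.mem_singleton.1 hA]; exact MeasurableSet.univ
  pairwiseDisj A hA B hB hAB := absurd ((Finset.mem_singleton.1 hA).trans
    (Finset.mem_singleton.1 hB).symm) hAB
  cover := by simp
  pos A hA := by simp [Finset.mem_singleton.1 hA]

section

variable {μ : Measure Ω} [IsProbabilityMeasure μ] {f : (Ω → ℝ) → EReal}

theorem pCondExp_trivPartition (Y : Ω → ℝ) :
    pCondExp μ (trivPartition μ) Y = fun _ => ∫ ω, Y ω ∂μ := by
  funext ω
  simp [pCondExp, trivPartition]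

theorem DilMono.apply_const_integral_le (hf : DilMono μ {X | Integrable X μ} f) {Y : Ω → ℝ}
    (hY : Integrable Y μ) : f (fun _ => ∫ ω, Y ω ∂μ) ≤ f Y := by
  simpa only [pCondExp_trivPartition] using hf Y hY (trivPartition μ)

theorem lowerSemicontinuous_apply_sub_const
    (hlsc : ∀ (Xn : ℕ → Ω → ℝ) (X : Ω → ℝ), (∀ n, Integrable (Xn n) μ) → Integrable X μ →
      Tendsto (fun n => ∫ ω, |Xn n ω - X ω| ∂μ) atTop (𝓝 0) →
      f X ≤ liminf (fun n => f (Xn n)) atTop)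
    {X : Ω → ℝ} (hX : Integrable X μ) :
    LowerSemicontinuous fun t : ℝ => f (fun ω => X ω - t) := by
  refine lowerSemicontinuous_of_le_liminf_of_tendsto fun t s hts => ?_
  refine hlsc _ _ (fun n => hX.sub (integrable_const _)) (hX.sub (integrable_const s)) ?_
  simp only [sub_sub_sub_cancel_left, integral_const, probReal_univ, one_smul]
  simpa using (tendsto_const_nhds (x := s)).sub hts |>.abs

theorem tendsto_apply_sub_const_sub_cocompact (hdil : DilMono μ {X | Integrable X μ} f)
    (hcoercive : ∀ M : ℝ, ∃ N : ℝ, ∀ s : ℝ, N ≤ |s| →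
      (M : EReal) ≤ f (fun _ => s) + s)
    {X : Ω → ℝ} (hX : Integrable X μ) :
    Tendsto (fun t : ℝ => f (fun ω => X ω - t) - t) (cocompact ℝ) (𝓝 ⊤) := by
  set m := ∫ ω, X ω ∂μ
  rw [EReal.tendsto_nhds_top_iff_real]
  intro M
  obtain ⟨N, hN⟩ := hcoercive (M + 1 + m)
  filter_upwards [tendsto_norm_cocompact_atTop.eventually_ge_atTop (N + |m|)] with t ht
  have hNt : N ≤ |m - t| := by
    rw [Real.norm_eq_abs] at ht
    linarith [abs_sub_abs_le_abs_sub t m, abs_sub_comm t m]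
  have hmean : ∫ ω, (X ω - t) ∂μ = m - t := by simp [integral_sub hX (integrable_const t), m]
  calc (M : EReal) < (M + 1 : ℝ) := by exact_mod_cast lt_add_one M
    _ ≤ f (fun _ => m - t) + ((m - t : ℝ) : EReal) - m := by
      rw [EReal.le_sub_iff_add_le (Or.inl (EReal.coe_ne_bot m)) (Or.inl (EReal.coe_ne_top m))]
      exact_mod_cast hN (m - t) hNt
    _ = f (fun _ => m - t) - t := EReal.add_coe_sub_sub_coe _ m t
    _ ≤ f (fun ω => X ω - t) - t := by
      refine EReal.sub_le_sub ?_ le_rfl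
      simpa only [hmean] using
        hdil.apply_const_integral_le (Y := fun ω => X ω - t) (hX.sub (integrable_const t))

end

theorem stmt12_general (μ : Measure Ω) [IsProbabilityMeasure μ]
    (f : (Ω → ℝ) → EReal)
    (hdil : ∀ X : Ω → ℝ, Integrable X μ → ∀ π : FinPartition μ,
      f (pCondExp μ π X) ≤ f X)
    (hlsc : ∀ (Xn : ℕ → Ω → ℝ) (X : Ω → ℝ), (∀ n, Integrable (Xn n) μ) →
      Integrable X μ →
      Tendsto (fun n => ∫ ω, |Xn n ω - X ω| ∂μ) atTop (nhds 0) →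
      f X ≤ liminf (fun n => f (Xn n)) atTop)
    (hcoercive : ∀ M : ℝ, ∃ N : ℝ, ∀ s : ℝ, N ≤ |s| →
      (M : EReal) ≤ f (fun _ => s) + (s : EReal)) :
    ∀ X : Ω → ℝ, Integrable X μ →
      ∃ s : ℝ, (⨅ t : ℝ, f (fun ω => X ω - t) - (t : EReal)) =
        f (fun ω => X ω - s) - (s : EReal) := by
  intro X hX
  have hneg : LowerSemicontinuous fun t : ℝ => -(t : EReal) :=
    (continuous_neg.comp continuous_coe_real_ereal).lowerSemicontinuous
  have hg_lsc : LowerSemicontinuous fun t : ℝ => f (fun ω => X ω - t) - t :=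
    (lowerSemicontinuous_apply_sub_const hlsc hX).add' hneg fun t =>
      EReal.continuousAt_add (Or.inr (by simp)) (Or.inr (by simp))
  obtain ⟨s, hs⟩ := hg_lsc.exists_forall_le_of_tendsto_top
    (tendsto_apply_sub_const_sub_cocompact hdil hcoercive hX)
  exact ⟨s, le_antisymm (iInf_le _ s) (le_iInf hs)⟩

/-- If `f : L¹ → (-∞,∞]` is dilatation monotone, `‖·‖₁` lower
semicontinuous and coercive (`f(s·1) + s → ∞` as `|s| → ∞`), then the infimum in
`ρ^f(X) = inf_s {f(X - s) - s}` is attained for every `X ∈ L¹`. -/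
theorem stmt12 (μ : Measure Ω) [IsProbabilityMeasure μ]
    (f : (Ω → ℝ) → EReal) (hbot : ∀ X : Ω → ℝ, f X ≠ ⊥)
    (hdil : ∀ X : Ω → ℝ, Integrable X μ → ∀ π : FinPartition μ,
      f (pCondExp μ π X) ≤ f X)
    (hlsc : ∀ (Xn : ℕ → Ω → ℝ) (X : Ω → ℝ), (∀ n, Integrable (Xn n) μ) →
      Integrable X μ →
      Tendsto (fun n => ∫ ω, |Xn n ω - X ω| ∂μ) atTop (nhds 0) →
      f X ≤ liminf (fun n => f (Xn n)) atTop)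
    (hcoercive : ∀ M : ℝ, ∃ N : ℝ, ∀ s : ℝ, N ≤ |s| →
      (M : EReal) ≤ f (fun _ => s) + (s : EReal)) :
    ∀ X : Ω → ℝ, Integrable X μ →
      ∃ s : ℝ, (⨅ t : ℝ, f (fun ω => X ω - t) - (t : EReal)) =
        f (fun ω => X ω - s) - (s : EReal) :=
  stmt12_general μ f hdil hlsc hcoercive
end

section
/- Let G be a real-valued Orlicz function and L^G the corresponding Orlicz space inside L¹. Then the set 𝓧 = { X ∈ L¹ : (s − X)⁺ ∈ L^G for all s ∈ ℝ } equals L^G + L¹₊, the set of sums of an element of L^G and a nonnegative integrable random variable. -/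
open MeasureTheory Filter Topology
open scoped ENNReal

variable {Ω : Type*} [MeasurableSpace Ω]

/-- The properties of a real-valued Orlicz function `G : [0,∞) → [0,∞)`:
left-continuous, convex, `G(0) = 0 = lim_{x→0⁺} G(x)`, nonnegative and increasing on
`[0,∞)`, with `G(x) → ∞` as `x → ∞`. -/
structure IsOrlicz (G : ℝ → ℝ) : Prop where
  zero : G 0 = 0
  nonneg : ∀ x, 0 ≤ x → 0 ≤ G x
  convex : ConvexOn ℝ (Set.Ici (0 : ℝ)) G
  mono : MonotoneOn G (Set.Ici (0 : ℝ))
  left_cont : ∀ x : ℝ, 0 < x → Tendsto G (nhdsWithin x (Set.Iio x)) (nhds (G x))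
  zero_lim : Tendsto G (nhdsWithin 0 (Set.Ioi 0)) (nhds 0)
  top_lim : Tendsto G atTop atTop

/-- Membership in the Orlicz space `L^G ⊆ L¹`:
`X ∈ L¹` and `E[G(c|X|)] < ∞` for some `c > 0`. -/
def MemLG {Ω : Type*} [MeasurableSpace Ω] (μ : Measure Ω) (G : ℝ → ℝ) (X : Ω → ℝ) : Prop :=
  Integrable X μ ∧ ∃ c : ℝ, 0 < c ∧ (∫⁻ ω, ENNReal.ofReal (G (c * |X ω|)) ∂μ) < ⊤

/-- The Luxemburg norm `‖Z‖_G = inf{λ > 0 : E[G(|Z|/λ)] ≤ 1}`, valued in `[0,∞]`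
(`∞` if no such `λ` exists, i.e. if `Z ∉ L^G`). -/
noncomputable def luxNorm {Ω : Type*} [MeasurableSpace Ω] (μ : Measure Ω) (G : ℝ → ℝ)
    (Z : Ω → ℝ) : ℝ≥0∞ :=
  sInf {l : ℝ≥0∞ | 0 < l ∧ l ≠ ⊤ ∧
    (∫⁻ ω, ENNReal.ofReal (G (|Z ω| / l.toReal)) ∂μ) ≤ 1}

/-
Every `X ∈ L¹` splits as `X = min X 0 + X⁺`, and `|min X 0| = (0 - X)⁺`, so `X ∈ 𝓧` puts the
negative part in `L^G`. Conversely, for `X = Y + W` with `W ≥ 0` one has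
`0 ≤ (s - X)⁺ ≤ |s| + |Y|`, and `L^G` is a solid vector space containing the constants.
-/

section

variable {μ : Measure Ω} {G : ℝ → ℝ}

lemma MonotoneOn.measurable_comp_max_zero (hG : MonotoneOn G (Set.Ici 0)) :
    Measurable fun x => G (max x 0) :=
  Monotone.measurable fun x y hxy =>
    hG (le_max_right x 0) (le_max_right y 0) (max_le_max hxy le_rfl)

lemma IsOrlicz.apply_half_add_le (hG : IsOrlicz G) {a b : ℝ} (ha : 0 ≤ a) (hb : 0 ≤ b) :
    G ((a + b) / 2) ≤ G a + G b := by
  have hconv := hG.convex.2 (Set.mem_Ici.mpr ha) (Set.mem_Ici.mpr hb)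
    (by norm_num : (0 : ℝ) ≤ 1 / 2) (by norm_num : (0 : ℝ) ≤ 1 / 2) (by norm_num)
  simp only [smul_eq_mul] at hconv
  calc G ((a + b) / 2) = G (1 / 2 * a + 1 / 2 * b) := by congr 1; ring
    _ ≤ 1 / 2 * G a + 1 / 2 * G b := hconv
    _ ≤ G a + G b := by linarith [hG.nonneg a ha, hG.nonneg b hb]

lemma MemLG.of_abs_le (hG : MonotoneOn G (Set.Ici 0)) {Y Z : Ω → ℝ} (hZ : MemLG μ G Z)
    (hY : Integrable Y μ) (h : ∀ᵐ ω ∂μ, |Y ω| ≤ |Z ω|) : MemLG μ G Y := by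
  obtain ⟨-, c, hc, hfin⟩ := hZ
  refine ⟨hY, c, hc, lt_of_le_of_lt (lintegral_mono_ae ?_) hfin⟩
  filter_upwards [h] with ω hω
  exact ENNReal.ofReal_le_ofReal <| hG (by positivity : (0 : ℝ) ≤ c * |Y ω|)
    (by positivity : (0 : ℝ) ≤ c * |Z ω|) (mul_le_mul_of_nonneg_left hω hc.le)

lemma MemLG.abs (hG : MonotoneOn G (Set.Ici 0)) {Y : Ω → ℝ} (hY : MemLG μ G Y) :
    MemLG μ G fun ω => |Y ω| :=
  hY.of_abs_le hG hY.1.abs (Eventually.of_forall fun ω => (abs_abs (Y ω)).le)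

lemma memLG_const [IsFiniteMeasure μ] (s : ℝ) : MemLG μ G fun _ => s := by
  refine ⟨integrable_const s, 1, one_pos, ?_⟩
  rw [lintegral_const]
  exact ENNReal.mul_lt_top ENNReal.ofReal_lt_top (measure_lt_top μ _)

lemma MemLG.add (hG : IsOrlicz G) {Y₁ Y₂ : Ω → ℝ} (h₁ : MemLG μ G Y₁) (h₂ : MemLG μ G Y₂) :
    MemLG μ G (Y₁ + Y₂) := by
  obtain ⟨hi₁, c₁, hc₁, hf₁⟩ := h₁
  obtain ⟨hi₂, c₂, hc₂, hf₂⟩ := h₂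
  obtain ⟨c, hc, hc₁', hc₂'⟩ : ∃ c : ℝ, 0 < c ∧ c ≤ c₁ / 2 ∧ c ≤ c₂ / 2 :=
    ⟨min c₁ c₂ / 2, by positivity, by linarith [min_le_left c₁ c₂],
      by linarith [min_le_right c₁ c₂]⟩
  have hpoint : ∀ ω, G (c * |(Y₁ + Y₂) ω|) ≤ G (c₁ * |Y₁ ω|) + G (c₂ * |Y₂ ω|) := by
    intro ω
    have hle : c * |(Y₁ + Y₂) ω| ≤ (c₁ * |Y₁ ω| + c₂ * |Y₂ ω|) / 2 :=
      calc c * |(Y₁ + Y₂) ω| ≤ c * |Y₁ ω| + c * |Y₂ ω| := by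
            rw [← mul_add]; exact mul_le_mul_of_nonneg_left (abs_add_le _ _) hc.le
        _ ≤ c₁ / 2 * |Y₁ ω| + c₂ / 2 * |Y₂ ω| := by gcongr
        _ = (c₁ * |Y₁ ω| + c₂ * |Y₂ ω|) / 2 := by ring
    exact (hG.mono (Set.mem_Ici.mpr (by positivity)) (Set.mem_Ici.mpr (by positivity)) hle).trans
      (hG.apply_half_add_le (by positivity) (by positivity))
  have hmeas : AEMeasurable (fun ω => ENNReal.ofReal (G (c₁ * |Y₁ ω|))) μ := by
    have hmax := hG.mono.measurable_comp_max_zero.comp_aemeasurable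
      ((hi₁.aestronglyMeasurable.aemeasurable.abs).const_mul c₁)
    refine ENNReal.measurable_ofReal.comp_aemeasurable (hmax.congr ?_)
    exact Eventually.of_forall fun ω => by
      simp only [Function.comp_apply, max_eq_left (by positivity : (0 : ℝ) ≤ c₁ * |Y₁ ω|)]
  refine ⟨hi₁.add hi₂, c, hc, ?_⟩
  calc ∫⁻ ω, ENNReal.ofReal (G (c * |(Y₁ + Y₂) ω|)) ∂μ
      ≤ ∫⁻ ω, ENNReal.ofReal (G (c₁ * |Y₁ ω|)) + ENNReal.ofReal (G (c₂ * |Y₂ ω|)) ∂μ :=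
        lintegral_mono fun ω => (ENNReal.ofReal_le_ofReal (hpoint ω)).trans ENNReal.ofReal_add_le
    _ = (∫⁻ ω, ENNReal.ofReal (G (c₁ * |Y₁ ω|)) ∂μ)
        + ∫⁻ ω, ENNReal.ofReal (G (c₂ * |Y₂ ω|)) ∂μ := lintegral_add_left' hmeas _
    _ < ⊤ := ENNReal.add_lt_top.mpr ⟨hf₁, hf₂⟩

end

/-- For a real-valued Orlicz function `G`,
`{X ∈ L¹ : (s - X)⁺ ∈ L^G for all s ∈ ℝ} = L^G + L¹₊`. -/
theorem stmt14 (μ : Measure Ω) [IsProbabilityMeasure μ]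
    (G : ℝ → ℝ) (hG : IsOrlicz G) :
    {X : Ω → ℝ | Integrable X μ ∧
        ∀ s : ℝ, MemLG μ G (fun ω => max (s - X ω) 0)} =
      {X : Ω → ℝ | ∃ Y W : Ω → ℝ, MemLG μ G Y ∧ Integrable W μ ∧
        (∀ ω, 0 ≤ W ω) ∧ X = Y + W} := by
  ext X
  constructor
  · rintro ⟨hX, hs⟩
    have hneg : ∀ ω, |min (X ω) 0| ≤ |max (0 - X ω) 0| := fun ω => by
      rcases le_total (X ω) 0 with h | h <;> simp [h]
    refine ⟨fun ω => min (X ω) 0, fun ω => max (X ω) 0,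
      (hs 0).of_abs_le hG.mono (hX.inf (integrable_const 0)) (Eventually.of_forall hneg),
      hX.pos_part, fun ω => le_max_right _ _, ?_⟩
    funext ω
    rw [Pi.add_apply, min_add_max, add_zero]
  · rintro ⟨Y, W, hY, hW, hW₀, rfl⟩
    have hX : Integrable (Y + W) μ := hY.1.add hW
    refine ⟨hX, fun s => ?_⟩
    have hbound : ∀ ω, |max (s - (Y ω + W ω)) 0| ≤ |(|s| + |Y ω|)| := fun ω => by
      rw [abs_of_nonneg (le_max_right _ 0), abs_of_nonneg (by positivity)]
      exact max_le (by linarith [le_abs_self s, neg_abs_le (Y ω), hW₀ ω]) (by positivity)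
    exact ((memLG_const |s|).add hG (hY.abs hG.mono)).of_abs_le hG.mono
      ((integrable_const s).sub hX).pos_part (Eventually.of_forall hbound)
end

section
/- Let H: ℝ → [0, ∞) be increasing and convex, G an Orlicz function with Luxemburg norm ‖·‖_G, and F̄: [0, ∞] → (−∞, ∞] increasing with F̄(∞) = ∞. Define f(X) = F̄(‖H(−X)‖_G) for X ∈ L¹ (with ‖H(−X)‖_G = ∞ if H(−X) ∉ L^G). Then f is dilatation monotone: f(E[X|π]) ≤ f(X) for every X ∈ L¹ and every finite measurable partition π with positive-probability members. -/
open MeasureTheory Filter Topology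
open scoped ENNReal

variable {Ω : Type*} [MeasurableSpace Ω]

/-! On each cell `A` of `π` the function `E[X|π]` is the constant `⨍_A X`, so for every scale
`t > 0` Jensen's inequality for the convex function `Φ x = G (H (-x) / t)` gives
`μ A · Φ(⨍_A X) ≤ ∫_A Φ(X)`. Summing over the cells, `E[G(H(-E[X|π])/t)] ≤ E[G(H(-X)/t)]`,
so every admissible `t` in the Luxemburg norm of `H(-X)` is admissible for `H(-E[X|π])`, and
`F̄` is monotone. -/

theorem ConvexOn.comp_of_mapsTo {E : Type*} [AddCommMonoid E] [Module ℝ E] {s : Set E}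
    {t : Set ℝ} {f : E → ℝ} {g : ℝ → ℝ} (hg : ConvexOn ℝ t g) (hf : ConvexOn ℝ s f)
    (hg' : MonotoneOn g t) (hst : Set.MapsTo f s t) : ConvexOn ℝ s (g ∘ f) :=
  ⟨hf.1, fun _ hx _ hy _ _ ha hb hab =>
    (hg' (hst (hf.1 hx hy ha hb hab)) (hg.1 (hst hx) (hst hy) ha hb hab)
      (hf.2 hx hy ha hb hab)).trans (hg.2 (hst hx) (hst hy) ha hb hab)⟩

theorem ConvexOn.ofReal_map_setAverage_mul_le {α : Type*} [MeasurableSpace α] {μ : Measure α}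
    {Φ : ℝ → ℝ} (hΦ : ConvexOn ℝ Set.univ Φ) (hΦ₀ : ∀ x, 0 ≤ Φ x) {X : α → ℝ} {A : Set α}
    (hA₀ : μ A ≠ 0) (hA : μ A ≠ ⊤) (hX : IntegrableOn X A μ) :
    ENNReal.ofReal (Φ (⨍ x in A, X x ∂μ)) * μ A ≤ ∫⁻ x in A, ENNReal.ofReal (Φ (X x)) ∂μ := by
  have hΦc : Continuous Φ := continuousOn_univ.mp (hΦ.continuousOn isOpen_univ)
  by_cases htop : ∫⁻ x in A, ENNReal.ofReal (Φ (X x)) ∂μ = ⊤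
  · rw [htop]; exact le_top
  have hΦX : IntegrableOn (fun x => Φ (X x)) A μ :=
    ⟨hΦc.comp_aestronglyMeasurable hX.1,
      (hasFiniteIntegral_iff_ofReal (.of_forall fun x => hΦ₀ (X x))).2 (lt_top_iff_ne_top.2 htop)⟩
  have jensen : Φ (⨍ x in A, X x ∂μ) ≤ ⨍ x in A, Φ (X x) ∂μ :=
    hΦ.map_set_average_le hΦc.continuousOn isClosed_univ hA₀ hA (.of_forall fun _ => trivial)
      hX hΦX
  calc ENNReal.ofReal (Φ (⨍ x in A, X x ∂μ)) * μ A
      ≤ ENNReal.ofReal (⨍ x in A, Φ (X x) ∂μ) * μ A := by gcongr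
    _ = ∫⁻ x in A, ENNReal.ofReal (Φ (X x)) ∂μ := by
      rw [ofReal_setAverage hΦX (.of_forall fun x => hΦ₀ (X x)), ENNReal.div_mul_cancel hA₀ hA]

namespace FinPartition

variable {μ : Measure Ω} (π : FinPartition μ)

theorem lintegral_eq_sum (f : Ω → ℝ≥0∞) :
    ∫⁻ ω, f ω ∂μ = ∑ A ∈ π.parts, ∫⁻ ω in A, f ω ∂μ := by
  rw [← setLIntegral_univ, ← π.cover]
  exact lintegral_biUnion_finset (fun A hA B hB => π.pairwiseDisj A hA B hB) π.measSet f

theorem pCondExp_eq_setAverage (X : Ω → ℝ) {A : Set Ω} (hA : A ∈ π.parts) {ω : Ω}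
    (hω : ω ∈ A) : pCondExp μ π X ω = ⨍ x in A, X x ∂μ := by
  rw [pCondExp, Finset.sum_eq_single_of_mem A hA, Set.indicator_of_mem hω, setAverage_eq,
    smul_eq_mul, measureReal_def, div_eq_inv_mul]
  intro B hB hBA
  exact Set.indicator_of_notMem (Set.disjoint_right.mp (π.pairwiseDisj B hB A hA hBA) hω) _

theorem lintegral_comp_pCondExp_le [IsFiniteMeasure μ] {Φ : ℝ → ℝ}
    (hΦ : ConvexOn ℝ Set.univ Φ) (hΦ₀ : ∀ x, 0 ≤ Φ x) {X : Ω → ℝ} (hX : Integrable X μ) :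
    ∫⁻ ω, ENNReal.ofReal (Φ (pCondExp μ π X ω)) ∂μ ≤ ∫⁻ ω, ENNReal.ofReal (Φ (X ω)) ∂μ := by
  rw [π.lintegral_eq_sum, π.lintegral_eq_sum]
  refine Finset.sum_le_sum fun A hA => ?_
  calc ∫⁻ ω in A, ENNReal.ofReal (Φ (pCondExp μ π X ω)) ∂μ
      = ∫⁻ _ in A, ENNReal.ofReal (Φ (⨍ x in A, X x ∂μ)) ∂μ :=
        setLIntegral_congr_fun (π.measSet A hA) fun ω hω => by
          rw [π.pCondExp_eq_setAverage X hA hω]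
    _ = ENNReal.ofReal (Φ (⨍ x in A, X x ∂μ)) * μ A := setLIntegral_const _ _
    _ ≤ ∫⁻ ω in A, ENNReal.ofReal (Φ (X ω)) ∂μ :=
        hΦ.ofReal_map_setAverage_mul_le hΦ₀ (π.pos A hA).ne' (measure_ne_top μ A) hX.integrableOn

end FinPartition

theorem luxNorm_le_luxNorm_of_lintegral_le {μ : Measure Ω} {G : ℝ → ℝ} {Z W : Ω → ℝ}
    (h : ∀ t : ℝ, 0 ≤ t → ∫⁻ ω, ENNReal.ofReal (G (|Z ω| / t)) ∂μ ≤
      ∫⁻ ω, ENNReal.ofReal (G (|W ω| / t)) ∂μ) :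
    luxNorm μ G Z ≤ luxNorm μ G W :=
  sInf_le_sInf fun _ ⟨hl₀, hl, hW⟩ => ⟨hl₀, hl, (h _ ENNReal.toReal_nonneg).trans hW⟩

theorem stmt15_general (μ : Measure Ω) [IsProbabilityMeasure μ]
    (G : ℝ → ℝ) (hG : IsOrlicz G)
    (H : ℝ → ℝ) (hHconv : ConvexOn ℝ Set.univ H)
    (hHnonneg : ∀ x, 0 ≤ H x)
    (F : ℝ≥0∞ → EReal) (hFmono : Monotone F) :
    ∀ (X : Ω → ℝ), Integrable X μ → ∀ π : FinPartition μ,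
      F (luxNorm μ G (fun ω => H (-(pCondExp μ π X ω)))) ≤
        F (luxNorm μ G (fun ω => H (-X ω))) := by
  intro X hX π
  refine hFmono (luxNorm_le_luxNorm_of_lintegral_le fun t ht => ?_)
  have hHt : ConvexOn ℝ Set.univ fun x => t⁻¹ • H (-x) := by
    simpa using (hHconv.comp_linearMap (-LinearMap.id)).smul (inv_nonneg.mpr ht)
  have hΦ : ConvexOn ℝ Set.univ (G ∘ fun x => t⁻¹ • H (-x)) :=
    hG.convex.comp_of_mapsTo hHt hG.mono
      fun x _ => Set.mem_Ici.mpr (smul_nonneg (inv_nonneg.mpr ht) (hHnonneg (-x)))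
  simpa only [Function.comp_apply, smul_eq_mul, abs_of_nonneg (hHnonneg _), div_eq_inv_mul,
    mul_comm] using π.lintegral_comp_pCondExp_le hΦ
      (fun x => hG.nonneg _ (mul_nonneg (inv_nonneg.mpr ht) (hHnonneg _))) hX

/-- `f(X) = F̄(‖H(-X)‖_G)` is dilatation monotone on `L¹`, for `H` increasing
convex nonnegative, `G` an Orlicz function and `F̄ : [0,∞] → (-∞,∞]` increasing with
`F̄(∞) = ∞`. -/
theorem stmt15 (μ : Measure Ω) [IsProbabilityMeasure μ]
    (G : ℝ → ℝ) (hG : IsOrlicz G)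
    (H : ℝ → ℝ) (hHmono : Monotone H) (hHconv : ConvexOn ℝ Set.univ H)
    (hHnonneg : ∀ x, 0 ≤ H x)
    (F : ℝ≥0∞ → EReal) (hFmono : Monotone F) (hFtop : F ⊤ = ⊤)
    (hFbot : ∀ x, F x ≠ ⊥) :
    ∀ (X : Ω → ℝ), Integrable X μ → ∀ π : FinPartition μ,
      F (luxNorm μ G (fun ω => H (-(pCondExp μ π X ω)))) ≤
        F (luxNorm μ G (fun ω => H (-X ω))) :=
  stmt15_general μ G hG H hHconv hHnonneg F hFmono
end

section
/- Let H: ℝ → [0, ∞) be increasing, convex and continuous, G a real-valued Orlicz function, and F: [0,∞) → (−∞, ∞] left-continuous, increasing, convex, not identically ∞, with F(x) → ∞ as x → ∞; extend F to F̄ with F̄(∞) = ∞. Then f(X) = F̄(‖H(−X)‖_G) is ‖·‖₁ lower semicontinuous on L¹: every sublevel set {X ∈ L¹ : f(X) ≤ λ} is closed in L¹-norm. -/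
open MeasureTheory Filter Topology
open scoped ENNReal

variable {Ω : Type*} [MeasurableSpace Ω]

/-! L¹-convergence gives an a.e. convergent subsequence, and Fatou's lemma applied to the
modular `E[G(|Z|/λ)]` along it makes the Luxemburg norm lower semicontinuous:
`‖H(-X)‖_G ≤ liminf ‖H(-X_{n_k})‖_G`. The extension `F̄` is increasing and left-continuous on
`(0, ∞]` (at `∞` because `F → ∞`), so `F̄` of that liminf is at most
`liminf F̄(‖H(-X_{n_k})‖_G) ≤ c`. -/

theorem IsOrlicz.continuousOn {G : ℝ → ℝ} (hG : IsOrlicz G) : ContinuousOn G (Set.Ici 0) := by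
  intro x hx
  rcases (Set.mem_Ici.mp hx).eq_or_lt with rfl | hx0
  · rw [ContinuousWithinAt, ← Set.Ioi_insert, nhdsWithin_insert, tendsto_sup]
    exact ⟨tendsto_pure_nhds G 0, by simpa [hG.zero] using hG.zero_lim⟩
  · have hconv := hG.convex.subset Set.Ioi_subset_Ici_self (convex_Ioi 0)
    exact (hconv.continuousOn isOpen_Ioi |>.continuousAt (Ioi_mem_nhds hx0)).continuousWithinAt

theorem exists_subseq_tendsto_ae_of_integral_abs_sub {μ : Measure Ω} {f : ℕ → Ω → ℝ}
    {g : Ω → ℝ} (hf : ∀ n, Integrable (f n) μ) (hg : Integrable g μ)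
    (h : Tendsto (fun n => ∫ ω, |f n ω - g ω| ∂μ) atTop (𝓝 0)) :
    ∃ ns : ℕ → ℕ, StrictMono ns ∧ ∀ᵐ ω ∂μ, Tendsto (fun k => f (ns k) ω) atTop (𝓝 (g ω)) := by
  have heq : ∀ n, eLpNorm (f n - g) 1 μ = ENNReal.ofReal (∫ ω, |f n ω - g ω| ∂μ) := fun n => by
    rw [eLpNorm_one_eq_lintegral_enorm,
      ← ofReal_integral_norm_eq_lintegral_enorm ((hf n).sub hg)]
    simp [Real.norm_eq_abs]
  have hLp : Tendsto (fun n => eLpNorm (f n - g) 1 μ) atTop (𝓝 0) := by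
    simpa only [heq, ENNReal.ofReal_zero] using ENNReal.tendsto_ofReal h
  exact (tendstoInMeasure_of_tendsto_eLpNorm one_ne_zero (fun n => (hf n).aestronglyMeasurable)
    hg.aestronglyMeasurable hLp).exists_seq_tendsto_ae

section Luxemburg

variable {μ : Measure Ω} {G : ℝ → ℝ}

theorem lintegral_le_one_of_luxNorm_lt (hG : MonotoneOn G (Set.Ici 0)) {Z : Ω → ℝ}
    {l : ℝ≥0∞} (h : luxNorm μ G Z < l) (hl : l ≠ ⊤) :
    ∫⁻ ω, ENNReal.ofReal (G (|Z ω| / l.toReal)) ∂μ ≤ 1 := by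
  obtain ⟨s, ⟨hs0, hs, hint⟩, hsl⟩ := sInf_lt_iff.mp h
  refine le_trans (lintegral_mono fun ω => ENNReal.ofReal_le_ofReal ?_) hint
  have hs0' : 0 < s.toReal := ENNReal.toReal_pos hs0.ne' hs
  have hsl' : s.toReal ≤ l.toReal := ENNReal.toReal_mono hl hsl.le
  exact hG (Set.mem_Ici.2 (by positivity)) (Set.mem_Ici.2 (by positivity)) (by gcongr)

theorem lintegral_ofReal_le_liminf (hG : ContinuousOn G (Set.Ici 0)) {r : ℝ} (hr : 0 ≤ r)
    {Z : ℕ → Ω → ℝ} {Zlim : Ω → ℝ} (hZ : ∀ k, AEMeasurable (Z k) μ)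
    (hlim : ∀ᵐ ω ∂μ, Tendsto (fun k => Z k ω) atTop (𝓝 (Zlim ω))) :
    ∫⁻ ω, ENNReal.ofReal (G (|Zlim ω| / r)) ∂μ ≤
      liminf (fun k => ∫⁻ ω, ENNReal.ofReal (G (|Z k ω| / r)) ∂μ) atTop := by
  set φ : ℝ → ℝ≥0∞ := fun x => ENNReal.ofReal (G (|x| / r))
  have hφ : Continuous φ := ENNReal.continuous_ofReal.comp <|
    hG.comp_continuous (continuous_abs.div_const r) fun x => Set.mem_Ici.2 (by positivity)
  calc ∫⁻ ω, φ (Zlim ω) ∂μ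
      = ∫⁻ ω, liminf (fun k => φ (Z k ω)) atTop ∂μ :=
        lintegral_congr_ae <| hlim.mono fun ω hω => ((hφ.tendsto _).comp hω).liminf_eq.symm
    _ ≤ liminf (fun k => ∫⁻ ω, φ (Z k ω) ∂μ) atTop :=
        lintegral_liminf_le' fun k => hφ.measurable.comp_aemeasurable (hZ k)

theorem luxNorm_le_liminf (hGc : ContinuousOn G (Set.Ici 0)) (hGm : MonotoneOn G (Set.Ici 0))
    {Z : ℕ → Ω → ℝ} {Zlim : Ω → ℝ} (hZ : ∀ k, AEMeasurable (Z k) μ)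
    (hlim : ∀ᵐ ω ∂μ, Tendsto (fun k => Z k ω) atTop (𝓝 (Zlim ω))) :
    luxNorm μ G Zlim ≤ liminf (fun k => luxNorm μ G (Z k)) atTop := by
  refine le_of_forall_gt_imp_ge_of_dense fun l hl => ?_
  rcases eq_or_ne l ⊤ with rfl | hl_top
  · exact le_top
  have hl0 : 0 < l := pos_of_gt hl
  refine sInf_le ⟨hl0, hl_top, ?_⟩
  calc ∫⁻ ω, ENNReal.ofReal (G (|Zlim ω| / l.toReal)) ∂μ
      ≤ liminf (fun k => ∫⁻ ω, ENNReal.ofReal (G (|Z k ω| / l.toReal)) ∂μ) atTop :=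
        lintegral_ofReal_le_liminf hGc ENNReal.toReal_nonneg hZ hlim
    _ ≤ 1 := liminf_le_of_frequently_le' <|
        (frequently_lt_of_liminf_lt (by isBoundedDefault) hl).mono
          fun k hk => lintegral_le_one_of_luxNorm_lt hGm hk hl_top

end Luxemburg

theorem Monotone.map_liminf_le_liminf_comp {α β ι : Type*} [CompleteLinearOrder α]
    [TopologicalSpace α] [OrderTopology α] [DenselyOrdered α] [CompleteLinearOrder β]
    [TopologicalSpace β] [OrderClosedTopology β] {f : α → β} (hf : Monotone f)
    (hlc : ∀ x, ⊥ < x → Tendsto f (𝓝[<] x) (𝓝 (f x))) {l : Filter ι} (u : ι → α) :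
    f (liminf u l) ≤ liminf (f ∘ u) l := by
  rcases (bot_le : ⊥ ≤ liminf u l).eq_or_lt with h | h
  · rw [← h]
    exact le_liminf_of_le (by isBoundedDefault) (Eventually.of_forall fun i => hf bot_le)
  · have : (𝓝[<] liminf u l).NeBot := nhdsLT_neBot_of_exists_lt ⟨⊥, h⟩
    refine _root_.le_of_tendsto (hlc _ h) (eventually_nhdsWithin_of_forall fun s hs => ?_)
    exact le_liminf_of_le (by isBoundedDefault)
      ((eventually_lt_of_lt_liminf hs).mono fun i hi => hf hi.le)

section ExtendTop

variable {F : ℝ → EReal}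

noncomputable def extendTop (F : ℝ → EReal) (l : ℝ≥0∞) : EReal := if l = ⊤ then ⊤ else F l.toReal

theorem monotone_extendTop (hF : MonotoneOn F (Set.Ici 0)) : Monotone (extendTop F) := by
  intro a b hab
  rcases eq_or_ne b ⊤ with rfl | hb
  · simp [extendTop]
  · simp only [extendTop, if_neg hb, if_neg (ne_top_of_le_ne_top hb hab)]
    exact hF ENNReal.toReal_nonneg ENNReal.toReal_nonneg (ENNReal.toReal_mono hb hab)

theorem tendsto_extendTop_nhdsLT (hFlc : ∀ x : ℝ, 0 < x → Tendsto F (𝓝[<] x) (𝓝 (F x)))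
    (hFtop : Tendsto F atTop (𝓝 ⊤)) {x : ℝ≥0∞} (hx : 0 < x) :
    Tendsto (extendTop F) (𝓝[<] x) (𝓝 (extendTop F x)) := by
  have hfin : extendTop F =ᶠ[𝓝[<] x] F ∘ ENNReal.toReal :=
    eventually_nhdsWithin_of_forall fun y hy => if_neg (ne_top_of_lt hy)
  refine Tendsto.congr' hfin.symm ?_
  rcases eq_or_ne x ⊤ with rfl | hx_top
  · refine hFtop.comp (tendsto_atTop.mpr fun b => ?_)
    filter_upwards [Ioo_mem_nhdsLT (ENNReal.ofReal_lt_top (r := b))] with y hy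
    exact (ENNReal.ofReal_le_iff_le_toReal (ne_top_of_lt hy.2)).mp hy.1.le
  · rw [extendTop, if_neg hx_top]
    refine (hFlc _ (ENNReal.toReal_pos hx.ne' hx_top)).comp (tendsto_nhdsWithin_iff.mpr ⟨?_, ?_⟩)
    · exact (ENNReal.tendsto_toReal hx_top).mono_left nhdsWithin_le_nhds
    · exact eventually_nhdsWithin_of_forall fun y hy => ENNReal.toReal_strict_mono hx_top hy

end ExtendTop

theorem stmt16_general (μ : Measure Ω)
    (G : ℝ → ℝ) (hG : IsOrlicz G) (H : ℝ → ℝ) (hHcont : Continuous H)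
    (F : ℝ → EReal) (hFmono : MonotoneOn F (Set.Ici (0 : ℝ)))
    (hFlc : ∀ x : ℝ, 0 < x → Tendsto F (nhdsWithin x (Set.Iio x)) (nhds (F x)))
    (hFtop : Tendsto F atTop (nhds (⊤ : EReal)))
    -- the extension `F̄` of `F` to `[0,∞]` with `F̄(∞) = ∞`
    (Fbar : ℝ≥0∞ → EReal)
    (hFbar : ∀ l : ℝ≥0∞, Fbar l = if l = ⊤ then ⊤ else F l.toReal) :
    ∀ (c : ℝ) (Xn : ℕ → Ω → ℝ) (X : Ω → ℝ),
      (∀ n, Integrable (Xn n) μ) → Integrable X μ →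
      (∀ n, Fbar (luxNorm μ G (fun ω => H (-(Xn n ω)))) ≤ (c : EReal)) →
      Tendsto (fun n => ∫ ω, |Xn n ω - X ω| ∂μ) atTop (nhds 0) →
      Fbar (luxNorm μ G (fun ω => H (-X ω))) ≤ (c : EReal) := by
  intro c Xn X hXnInt hXInt hbound hL1
  obtain rfl : Fbar = extendTop F := funext hFbar
  obtain ⟨ns, -, hns⟩ := exists_subseq_tendsto_ae_of_integral_abs_sub hXnInt hXInt hL1
  have hlux := luxNorm_le_liminf (μ := μ) hG.continuousOn hG.mono
    (Z := fun k ω => H (-(Xn (ns k) ω)))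
    (fun k => hHcont.measurable.comp_aemeasurable (hXnInt (ns k)).aemeasurable.neg)
    (hns.mono fun ω hω => (hHcont.tendsto _).comp hω.neg)
  have hF := monotone_extendTop hFmono
  calc extendTop F (luxNorm μ G fun ω => H (-X ω))
      ≤ extendTop F (liminf (fun k => luxNorm μ G fun ω => H (-(Xn (ns k) ω))) atTop) := hF hlux
    _ ≤ liminf (fun k => extendTop F (luxNorm μ G fun ω => H (-(Xn (ns k) ω)))) atTop :=
        hF.map_liminf_le_liminf_comp (fun _ hx => tendsto_extendTop_nhdsLT hFlc hFtop hx) _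
    _ ≤ c := liminf_le_of_frequently_le' (Frequently.of_forall fun k => hbound (ns k))

/-- `f(X) = F̄(‖H(-X)‖_G)` is `‖·‖₁` lower semicontinuous on `L¹`, for `H`
increasing convex continuous nonnegative, `G` a real-valued Orlicz function and
`F : [0,∞) → (-∞,∞]` left-continuous, increasing, convex, not identically `∞`, with
`F(x) → ∞` as `x → ∞`, extended by `F̄(∞) = ∞`. -/
theorem stmt16 (μ : Measure Ω) [IsProbabilityMeasure μ]
    (G : ℝ → ℝ) (hG : IsOrlicz G)
    (H : ℝ → ℝ) (hHmono : Monotone H) (hHconv : ConvexOn ℝ Set.univ H)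
    (hHcont : Continuous H) (hHnonneg : ∀ x, 0 ≤ H x)
    (F : ℝ → EReal) (hFbot : ∀ x : ℝ, 0 ≤ x → F x ≠ ⊥)
    (hFmono : MonotoneOn F (Set.Ici (0 : ℝ)))
    (hFconv : ∀ x ∈ Set.Ici (0:ℝ), ∀ y ∈ Set.Ici (0:ℝ), ∀ a b : ℝ,
      0 ≤ a → 0 ≤ b → a + b = 1 →
      F (a * x + b * y) ≤ (a : EReal) * F x + (b : EReal) * F y)
    (hFlc : ∀ x : ℝ, 0 < x → Tendsto F (nhdsWithin x (Set.Iio x)) (nhds (F x)))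
    (hFproper : ∃ x : ℝ, 0 ≤ x ∧ F x ≠ ⊤)
    (hFtop : Tendsto F atTop (nhds (⊤ : EReal)))
    -- the extension `F̄` of `F` to `[0,∞]` with `F̄(∞) = ∞`
    (Fbar : ℝ≥0∞ → EReal)
    (hFbar : ∀ l : ℝ≥0∞, Fbar l = if l = ⊤ then ⊤ else F l.toReal) :
    ∀ (c : ℝ) (Xn : ℕ → Ω → ℝ) (X : Ω → ℝ),
      (∀ n, Integrable (Xn n) μ) → Integrable X μ →
      (∀ n, Fbar (luxNorm μ G (fun ω => H (-(Xn n ω)))) ≤ (c : EReal)) →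
      Tendsto (fun n => ∫ ω, |Xn n ω - X ω| ∂μ) atTop (nhds 0) →
      Fbar (luxNorm μ G (fun ω => H (-X ω))) ≤ (c : EReal) :=
  stmt16_general μ G hG H hHcont F hFmono hFlc hFtop Fbar hFbar
end

section
/- Let F: [0,∞) → (−∞,∞] and H: ℝ → [0,∞) be increasing convex functions with F not identically ∞, F(x) → ∞ as x → ∞, H(x) → ∞ as x → ∞, and let c > 0. If lim_{s→∞}(F(H(s)) − c·s) = ∞, then lim_{s→∞}(F(H(s)/c) − s) = ∞. -/
open MeasureTheory Filter Topology

variable {Ω : Type*} [MeasurableSpace Ω]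

/-!
Choose `s₀ > 0` with `F(H s₀) - F(H 0) > c s₀`. The secant slope `p` of `F` over
`[H 0, H s₀]` and the secant slope `q` of `H` over `[0, s₀]` then satisfy
`p q = (F(H s₀) - F(H 0)) / s₀ > c`, and by convexity `F` and `H` lie above these secants
beyond `H s₀` and `s₀` respectively, so `F(H s / c) - s` grows at least like `(p q / c - 1) s`.
If `F` takes the value `∞` somewhere, it does so on a half-line, which `H s / c` eventually enters.
-/

open Set

section slope

variable {𝕜 : Type*} [Field 𝕜] [LinearOrder 𝕜] [IsStrictOrderedRing 𝕜] {s : Set 𝕜}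
  {f : 𝕜 → 𝕜}

theorem ConvexOn.add_slope_mul_sub_le (hf : ConvexOn 𝕜 s f) {a b x : 𝕜} (ha : a ∈ s)
    (hb : b ∈ s) (hx : x ∈ s) (hab : a < b) (hbx : b ≤ x) :
    f a + slope f a b * (x - a) ≤ f x := by
  have hax : a < x := hab.trans_le hbx
  calc f a + slope f a b * (x - a)
      ≤ f a + slope f a x * (x - a) := by
        have hslope : slope f a b ≤ slope f a x :=
          hf.slope_mono ha ⟨hb, hab.ne'⟩ ⟨hx, hax.ne'⟩ hbx
        gcongr
    _ = f x := by
        rw [slope_def_field]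
        field_simp [sub_ne_zero.2 hax.ne']
        ring

end slope

theorem tendsto_comp_div_sub_atTop {f H : ℝ → ℝ} {c : ℝ} (hc : 0 < c)
    (hf : ConvexOn ℝ (Ici 0) f) (hfm : MonotoneOn f (Ici 0))
    (hH : ConvexOn ℝ (Ici 0) H) (hH0 : ∀ s, 0 ≤ H s)
    (hfH : Tendsto (fun s => f (H s) - c * s) atTop atTop) :
    Tendsto (fun s => f (H s / c) - s) atTop atTop := by
  obtain ⟨s₀, hs₀, hgap⟩ : ∃ s₀, 0 < s₀ ∧ f (H 0) + c * s₀ < f (H s₀) := by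
    obtain ⟨s₀, hlarge, hpos⟩ :=
      ((hfH.eventually_gt_atTop (f (H 0))).and (eventually_gt_atTop 0)).exists
    exact ⟨s₀, hpos, by linarith⟩
  have hH_lt : H 0 < H s₀ := by
    by_contra! hle
    have hf_le := hfm (hH0 _) (hH0 _) hle
    nlinarith
  set p := slope f (H 0) (H s₀)
  set q := slope H 0 s₀
  have hp : 0 < p := by
    simp only [p, slope_def_field]
    apply div_pos <;> nlinarith
  have hpq : c < p * q := by
    have hpq_eq : p * q = (f (H s₀) - f (H 0)) / s₀ := by
      simp only [p, q, slope_def_field, sub_zero]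
      field_simp [sub_ne_zero.2 hH_lt.ne']
    rw [hpq_eq, lt_div_iff₀ hs₀]
    linarith
  have hq : 0 < q := pos_of_mul_pos_right (hc.trans hpq) hp.le
  have hf_ge : ∀ x, H s₀ ≤ x → f (H 0) + p * (x - H 0) ≤ f x := fun x hx =>
    hf.add_slope_mul_sub_le (hH0 0) (hH0 s₀) (hH0 s₀ |>.trans hx) hH_lt hx
  have hH_ge : ∀ s, s₀ ≤ s → H 0 + q * s ≤ H s := fun s hs => by
    simpa using hH.add_slope_mul_sub_le self_mem_Ici hs₀.le (hs₀.le.trans hs) hs₀ hs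
  have hH_div : Tendsto (fun s => H s / c) atTop atTop := by
    refine Tendsto.atTop_div_const hc (tendsto_atTop_mono' _ ?_
      (tendsto_atTop_add_const_left _ (H 0) (tendsto_id.const_mul_atTop hq)))
    filter_upwards [eventually_ge_atTop s₀] with s hs using hH_ge s hs
  have hlin : Tendsto (fun s => (p * q / c - 1) * s + (f (H 0) + p * H 0 / c - p * H 0))
      atTop atTop :=
    tendsto_atTop_add_const_right _ _ <| tendsto_id.const_mul_atTop <| by
      rw [sub_pos, lt_div_iff₀ hc]
      linarith
  refine tendsto_atTop_mono' _ ?_ hlin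
  filter_upwards [eventually_ge_atTop s₀, hH_div.eventually_ge_atTop (H s₀)] with s hs hHs
  calc (p * q / c - 1) * s + (f (H 0) + p * H 0 / c - p * H 0)
      = f (H 0) + p * ((H 0 + q * s) / c - H 0) - s := by ring
    _ ≤ f (H 0) + p * (H s / c - H 0) - s := by gcongr; exact hH_ge s hs
    _ ≤ f (H s / c) - s := by linarith [hf_ge _ hHs]

theorem convexOn_of_forall_eq_coe {F : ℝ → EReal} {f : ℝ → ℝ} {s : Set ℝ}
    (hs : Convex ℝ s) (hFf : ∀ x ∈ s, F x = f x)
    (hF : ∀ x ∈ s, ∀ y ∈ s, ∀ a b : ℝ, 0 ≤ a → 0 ≤ b → a + b = 1 →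
      F (a * x + b * y) ≤ (a : EReal) * F x + (b : EReal) * F y) :
    ConvexOn ℝ s f := by
  refine ⟨hs, fun x hx y hy a b ha hb hab => ?_⟩
  have hmem : a * x + b * y ∈ s := hs hx hy ha hb hab
  have hFxy := hF x hx y hy a b ha hb hab
  rw [hFf x hx, hFf y hy, hFf _ hmem] at hFxy
  exact_mod_cast hFxy

theorem tendsto_sub_nhds_top_of_eq_top {α : Type*} {l : Filter α} {F : ℝ → EReal}
    (hF : MonotoneOn F (Ici 0)) {x₀ : ℝ} (hx₀ : 0 ≤ x₀) (hFx₀ : F x₀ = ⊤) {g : α → ℝ}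
    (hg : Tendsto g l atTop) (u : α → ℝ) :
    Tendsto (fun a => F (g a) - u a) l (𝓝 ⊤) := by
  refine tendsto_const_nhds.congr' ?_
  filter_upwards [hg.eventually_ge_atTop x₀] with a ha
  have hFg : F (g a) = ⊤ := top_le_iff.1 (hFx₀ ▸ hF hx₀ (hx₀.trans ha) ha)
  rw [hFg, EReal.top_sub_coe]

theorem stmt18_general (F : ℝ → EReal) (H : ℝ → ℝ) (c : ℝ) (hc : 0 < c)
    (hFbot : ∀ x : ℝ, 0 ≤ x → F x ≠ ⊥)
    (hFmono : MonotoneOn F (Set.Ici (0 : ℝ)))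
    (hFconv : ∀ x ∈ Set.Ici (0:ℝ), ∀ y ∈ Set.Ici (0:ℝ), ∀ a b : ℝ,
      0 ≤ a → 0 ≤ b → a + b = 1 →
      F (a * x + b * y) ≤ (a : EReal) * F x + (b : EReal) * F y)
    (hHnonneg : ∀ x, 0 ≤ H x)
    (hHconv : ConvexOn ℝ Set.univ H) (hHtop : Tendsto H atTop atTop)
    (hyp : Tendsto (fun s : ℝ => F (H s) - ((c * s : ℝ) : EReal)) atTop
      (nhds (⊤ : EReal))) :
    Tendsto (fun s : ℝ => F (H s / c) - (s : EReal)) atTop (nhds (⊤ : EReal)) := by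
  by_cases htop : ∃ x, 0 ≤ x ∧ F x = ⊤
  · obtain ⟨x₀, hx₀, hFx₀⟩ := htop
    exact tendsto_sub_nhds_top_of_eq_top hFmono hx₀ hFx₀ (hHtop.atTop_div_const hc) _
  push Not at htop
  set f : ℝ → ℝ := fun x => (F x).toReal
  have hFf : ∀ x ∈ Ici (0 : ℝ), F x = f x := fun x hx =>
    (EReal.coe_toReal (htop x hx) (hFbot x hx)).symm
  have hfm : MonotoneOn f (Ici 0) := fun x hx y hy hxy => by
    have hFxy := hFmono hx hy hxy
    rwa [hFf x hx, hFf y hy, EReal.coe_le_coe_iff] at hFxy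
  have hfH : Tendsto (fun s => f (H s) - c * s) atTop atTop := by
    rw [← EReal.tendsto_coe_nhds_top_iff]
    refine hyp.congr fun s => ?_
    rw [hFf _ (hHnonneg s), EReal.coe_sub]
  have hreal := tendsto_comp_div_sub_atTop hc (convexOn_of_forall_eq_coe (convex_Ici 0) hFf hFconv)
    hfm (hHconv.subset (subset_univ _) (convex_Ici 0)) hHnonneg hfH
  rw [← EReal.tendsto_coe_nhds_top_iff] at hreal
  refine hreal.congr fun s => ?_
  rw [hFf _ (div_nonneg (hHnonneg s) hc.le), EReal.coe_sub]

/-- Let `F : [0,∞) → (-∞,∞]` and `H : ℝ → [0,∞)` be increasing convex with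
`F` not identically `∞`, `F(x) → ∞`, `H(x) → ∞`, and `c > 0`. If
`F(H(s)) - c·s → ∞` as `s → ∞`, then `F(H(s)/c) - s → ∞` as `s → ∞`. -/
theorem stmt18 (F : ℝ → EReal) (H : ℝ → ℝ) (c : ℝ) (hc : 0 < c)
    (hFbot : ∀ x : ℝ, 0 ≤ x → F x ≠ ⊥)
    (hFmono : MonotoneOn F (Set.Ici (0 : ℝ)))
    (hFconv : ∀ x ∈ Set.Ici (0:ℝ), ∀ y ∈ Set.Ici (0:ℝ), ∀ a b : ℝ,
      0 ≤ a → 0 ≤ b → a + b = 1 →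
      F (a * x + b * y) ≤ (a : EReal) * F x + (b : EReal) * F y)
    (hFproper : ∃ x : ℝ, 0 ≤ x ∧ F x ≠ ⊤)
    (hFtop : Tendsto F atTop (nhds (⊤ : EReal)))
    (hHnonneg : ∀ x, 0 ≤ H x) (hHmono : Monotone H)
    (hHconv : ConvexOn ℝ Set.univ H) (hHtop : Tendsto H atTop atTop)
    (hyp : Tendsto (fun s : ℝ => F (H s) - ((c * s : ℝ) : EReal)) atTop
      (nhds (⊤ : EReal))) :
    Tendsto (fun s : ℝ => F (H s / c) - (s : EReal)) atTop (nhds (⊤ : EReal)) :=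
  stmt18_general F H c hc hFbot hFmono hFconv hHnonneg hHconv hHtop hyp
end
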